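/- arXiv:2407.03945 — 2 statements merged into one kernel-verified Lean document; each statement's English description precedes it below -/
import Mathlib

section
/- Let s > d/2. There exists a constant C_s > 0 such that for all f, g in the periodic Sobolev space H^s(𝕋^d), the product fg lies in H^s(𝕋^d) and ‖fg‖_{H^s} ≤ C_s ‖f‖_{H^s} ‖g‖_{H^s}. -/
/-!
Write `ρ k = ⟨k⟩^s`. Since `⟨j + m⟩ ≤ ⟨j⟩ + ⟨m⟩`, we have `ρ (j + m) ≤ 2^s max (ρ j) (ρ m)`.
Inserting `1 = (ρ j ρ (k-j))⁻¹ · ρ j ρ (k-j)` into the convolution and applying Cauchy–Schwarz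
in `j` gives
`ρ k² |(f ⋆ g)_k|² ≤ (ρ k² Σ_j (ρ j ρ (k-j))⁻²) Σ_j (ρ j |f_j|)² (ρ (k-j) |g_{k-j}|)²`,
and the quasi-triangle inequality bounds the first factor uniformly in `k` by
`2 · 4^s Σ_j ⟨j⟩^{-2s}`, which is finite because `2s > d`. Summing over `k`, the double sum
factors into `‖f‖² ‖g‖²`. All sums are taken in `ℝ≥0∞`, so summability only has to be dealt
with when returning to `ℝ`.
-/

/-- ℓ¹ norm `|k| = Σ_l |k_l|` of a frequency vector. -/
noncomputable def kAbs {d : ℕ} (k : Fin d → ℤ) : ℝ := ∑ l, |(k l : ℝ)|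

/-- Japanese bracket `⟨k⟩ = max(|k|, 1)`. -/
noncomputable def jap {d : ℕ} (k : Fin d → ℤ) : ℝ := max (kAbs k) 1

/-- Squared `H^s(𝕋^d)` norm of a function given by its Fourier coefficients `u`. -/
noncomputable def sobNormSq (d : ℕ) (s : ℝ) (u : (Fin d → ℤ) → ℂ) : ℝ :=
  ∑' k : Fin d → ℤ, jap k ^ (2 * s) * ‖u k‖ ^ 2

/-- `H^s(𝕋^d)` norm. -/
noncomputable def sobNorm (d : ℕ) (s : ℝ) (u : (Fin d → ℤ) → ℂ) : ℝ :=
  Real.sqrt (sobNormSq d s u)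

/-- Membership in `H^s(𝕋^d)` (finiteness of the norm). -/
def memSob (d : ℕ) (s : ℝ) (u : (Fin d → ℤ) → ℂ) : Prop :=
  Summable (fun k : Fin d → ℤ => jap k ^ (2 * s) * ‖u k‖ ^ 2)

/-- Fourier coefficients of the product `fg`: the convolution of coefficients. -/
noncomputable def fourierConv (d : ℕ) (f g : (Fin d → ℤ) → ℂ) : (Fin d → ℤ) → ℂ :=
  fun k => ∑' j : Fin d → ℤ, f j * g (k - j)

open scoped ENNReal

namespace ENNReal

theorem tsum_mul_sq_le_sq_mul_sq {ι : Type*} (u v : ι → ℝ≥0∞) :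
    (∑' i, u i * v i) ^ 2 ≤ (∑' i, u i ^ 2) * ∑' i, v i ^ 2 := by
  let _ : MeasurableSpace ι := ⊤
  have h := lintegral_mul_le_Lp_mul_Lq MeasureTheory.Measure.count
    Real.HolderConjugate.two_two measurable_from_top.aemeasurable
    measurable_from_top.aemeasurable (f := u) (g := v)
  simp only [Pi.mul_apply, MeasureTheory.lintegral_count, ENNReal.rpow_two] at h
  calc (∑' i, u i * v i) ^ 2
      ≤ ((∑' i, u i ^ 2) ^ (1 / 2 : ℝ) * (∑' i, v i ^ 2) ^ (1 / 2 : ℝ)) ^ 2 := by gcongr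
    _ = (∑' i, u i ^ 2) * ∑' i, v i ^ 2 := by
      rw [← ENNReal.mul_rpow_of_nonneg _ _ (by norm_num), ← ENNReal.rpow_natCast,
        ← ENNReal.rpow_mul]
      norm_num

section WeightedConvolution

variable {α : Type*} [AddGroup α]

theorem tsum_tsum_mul_sub_eq_tsum_mul_tsum (x y : α → ℝ≥0∞) :
    ∑' k, ∑' j, x j * y (k - j) = (∑' j, x j) * ∑' m, y m := by
  rw [ENNReal.tsum_comm, ← ENNReal.tsum_mul_right]
  refine tsum_congr fun j => ?_
  rw [ENNReal.tsum_mul_left, ← (Equiv.subRight j).tsum_eq y]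
  rfl

theorem weight_sq_mul_tsum_inv_sq_le {ρ : α → ℝ≥0∞} {c : ℝ≥0∞}
    (hρ0 : ∀ k, ρ k ≠ 0) (hρtop : ∀ k, ρ k ≠ ∞)
    (hρ : ∀ j m, ρ (j + m) ≤ c * max (ρ j) (ρ m)) (k : α) :
    ρ k ^ 2 * ∑' j, (ρ j * ρ (k - j))⁻¹ ^ 2 ≤ 2 * c ^ 2 * ∑' j, (ρ j)⁻¹ ^ 2 := by
  have hterm : ∀ j, ρ k ^ 2 * (ρ j * ρ (k - j))⁻¹ ^ 2 ≤
      c ^ 2 * ((ρ (k - j))⁻¹ ^ 2 + (ρ j)⁻¹ ^ 2) := by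
    intro j
    have hk : ρ k ^ 2 ≤ c ^ 2 * (ρ j ^ 2 + ρ (k - j) ^ 2) := by
      calc ρ k ^ 2 = ρ (k - j + j) ^ 2 := by rw [sub_add_cancel]
        _ ≤ (c * max (ρ j) (ρ (k - j))) ^ 2 := by rw [max_comm]; gcongr; exact hρ _ _
        _ ≤ c ^ 2 * (ρ j ^ 2 + ρ (k - j) ^ 2) := by
          rw [mul_pow]
          gcongr
          rcases le_total (ρ j) (ρ (k - j)) with h | h
          · rw [max_eq_right h]; exact le_add_self
          · rw [max_eq_left h]; exact le_self_add
    have hcancel : ∀ a, ρ a ^ 2 * (ρ a)⁻¹ ^ 2 = 1 := fun a => by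
      rw [← mul_pow, ENNReal.mul_inv_cancel (hρ0 a) (hρtop a), one_pow]
    calc ρ k ^ 2 * (ρ j * ρ (k - j))⁻¹ ^ 2
        ≤ c ^ 2 * (ρ j ^ 2 + ρ (k - j) ^ 2) * (ρ j * ρ (k - j))⁻¹ ^ 2 := by gcongr
      _ = c ^ 2 * ((ρ (k - j))⁻¹ ^ 2 + (ρ j)⁻¹ ^ 2) := by
        rw [ENNReal.mul_inv (.inl (hρ0 j)) (.inl (hρtop j)), mul_pow, mul_assoc, add_mul,
          ← mul_assoc (ρ j ^ 2), hcancel, one_mul, mul_comm ((ρ j)⁻¹ ^ 2),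
          ← mul_assoc (ρ (k - j) ^ 2), hcancel, one_mul]
  calc ρ k ^ 2 * ∑' j, (ρ j * ρ (k - j))⁻¹ ^ 2
      = ∑' j, ρ k ^ 2 * (ρ j * ρ (k - j))⁻¹ ^ 2 := ENNReal.tsum_mul_left.symm
    _ ≤ ∑' j, c ^ 2 * ((ρ (k - j))⁻¹ ^ 2 + (ρ j)⁻¹ ^ 2) := ENNReal.tsum_le_tsum hterm
    _ = 2 * c ^ 2 * ∑' j, (ρ j)⁻¹ ^ 2 := by
      have hshift : ∑' j, (ρ (k - j))⁻¹ ^ 2 = ∑' j, (ρ j)⁻¹ ^ 2 :=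
        (Equiv.subLeft k).tsum_eq fun j => (ρ j)⁻¹ ^ 2
      rw [ENNReal.tsum_mul_left, ENNReal.tsum_add, hshift]
      ring

theorem tsum_weight_mul_conv_sq_le {ρ : α → ℝ≥0∞} {M : ℝ≥0∞}
    (hρ0 : ∀ k, ρ k ≠ 0) (hρtop : ∀ k, ρ k ≠ ∞)
    (hM : ∀ k, ρ k ^ 2 * ∑' j, (ρ j * ρ (k - j))⁻¹ ^ 2 ≤ M) (F G : α → ℝ≥0∞) :
    ∑' k, (ρ k * ∑' j, F j * G (k - j)) ^ 2 ≤
      M * (∑' j, (ρ j * F j) ^ 2) * ∑' j, (ρ j * G j) ^ 2 := by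
  have hCS : ∀ k, (∑' j, F j * G (k - j)) ^ 2 ≤ (∑' j, (ρ j * ρ (k - j))⁻¹ ^ 2) *
      ∑' j, (ρ j * F j) ^ 2 * (ρ (k - j) * G (k - j)) ^ 2 := by
    intro k
    have hsplit : ∀ j, F j * G (k - j) =
        (ρ j * ρ (k - j))⁻¹ * ((ρ j * F j) * (ρ (k - j) * G (k - j))) := by
      intro j
      rw [mul_mul_mul_comm, ← mul_assoc, ENNReal.inv_mul_cancel
        (mul_ne_zero (hρ0 j) (hρ0 _)) (ENNReal.mul_ne_top (hρtop j) (hρtop _)), one_mul]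
    simp only [hsplit, ← mul_pow]
    exact tsum_mul_sq_le_sq_mul_sq _ _
  calc ∑' k, (ρ k * ∑' j, F j * G (k - j)) ^ 2
      ≤ ∑' k, ρ k ^ 2 * ((∑' j, (ρ j * ρ (k - j))⁻¹ ^ 2) *
          ∑' j, (ρ j * F j) ^ 2 * (ρ (k - j) * G (k - j)) ^ 2) := by
        gcongr with k
        rw [mul_pow]
        gcongr
        exact hCS k
    _ ≤ ∑' k, M * ∑' j, (ρ j * F j) ^ 2 * (ρ (k - j) * G (k - j)) ^ 2 := by
        refine ENNReal.tsum_le_tsum fun k => ?_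
        rw [← mul_assoc]
        gcongr ?_ * _
        exact hM k
    _ = M * (∑' j, (ρ j * F j) ^ 2) * ∑' j, (ρ j * G j) ^ 2 := by
        rw [ENNReal.tsum_mul_left, mul_assoc, tsum_tsum_mul_sub_eq_tsum_mul_tsum
          (fun j => (ρ j * F j) ^ 2) (fun j => (ρ j * G j) ^ 2)]

end WeightedConvolution

end ENNReal

theorem kAbs_add_le {d : ℕ} (a b : Fin d → ℤ) : kAbs (a + b) ≤ kAbs a + kAbs b := by
  unfold kAbs
  rw [← Finset.sum_add_distrib]
  gcongr with l
  push_cast [Pi.add_apply]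
  exact abs_add_le _ _

theorem one_le_jap {d : ℕ} (k : Fin d → ℤ) : 1 ≤ jap k := le_max_right _ _

theorem jap_pos {d : ℕ} (k : Fin d → ℤ) : 0 < jap k := one_pos.trans_le (one_le_jap k)

theorem jap_rpow_pos {d : ℕ} (k : Fin d → ℤ) (s : ℝ) : 0 < jap k ^ s :=
  Real.rpow_pos_of_pos (jap_pos k) s

theorem jap_add_le {d : ℕ} (a b : Fin d → ℤ) : jap (a + b) ≤ jap a + jap b :=
  max_le ((kAbs_add_le a b).trans (add_le_add (le_max_left _ _) (le_max_left _ _)))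
    ((one_le_jap a).trans (le_add_of_nonneg_right (jap_pos b).le))

theorem jap_add_rpow_le {d : ℕ} {s : ℝ} (hs : 0 ≤ s) (a b : Fin d → ℤ) :
    jap (a + b) ^ s ≤ 2 ^ s * max (jap a ^ s) (jap b ^ s) := by
  have hmax : jap (a + b) ≤ 2 * max (jap a) (jap b) :=
    (jap_add_le a b).trans (by rw [two_mul]; exact add_le_add (le_max_left _ _) (le_max_right _ _))
  calc jap (a + b) ^ s ≤ (2 * max (jap a) (jap b)) ^ s := by
        gcongr
        exact (jap_pos _).le
    _ = 2 ^ s * max (jap a ^ s) (jap b ^ s) := by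
        rw [Real.mul_rpow zero_le_two ((jap_pos a).le.trans (le_max_left _ _)),
          (Real.monotoneOn_rpow_Ici_of_exponent_nonneg hs).map_max (jap_pos a).le (jap_pos b).le]

theorem summable_jap_rpow_neg {d : ℕ} {r : ℝ} (hr : (d : ℝ) < r) :
    Summable fun k : Fin d → ℤ => jap k ^ (-r) := by
  -- `ℤ^d` as a lattice in `Fin d → ℝ`, whose sup norm is at most the `ℓ¹` norm `kAbs`
  let L := Submodule.span ℤ (Set.range (Pi.basisFun ℝ (Fin d)))
  have hL : ∀ k : Fin d → ℤ, (fun l => (k l : ℝ)) ∈ L := fun k => by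
    simp [L, Module.Basis.mem_span_iff_repr_mem ℤ]
  let ι : (Fin d → ℤ) → L := fun k => ⟨fun l => (k l : ℝ), hL k⟩
  have hι : Function.Injective ι := fun a b h => by
    funext l
    simpa [ι] using congrFun (congrArg Subtype.val h) l
  have hrank : Module.finrank ℤ L = d := by rw [ZLattice.rank ℝ L]; simp
  have hsum := (ZLattice.summable_norm_rpow L (-r) (by rw [hrank]; linarith)).comp_injective hι
  refine hsum.of_norm_bounded_eventually ?_
  filter_upwards [Set.Finite.compl_mem_cofinite (Set.finite_singleton 0)] with k hk
  have hk0 : 0 < ‖ι k‖ := by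
    have hι0 : ι 0 = 0 := by ext; simp [ι]
    exact norm_pos_iff.2 ((hι.ne hk).trans_eq hι0)
  have hle : ‖ι k‖ ≤ jap k := by
    refine (pi_norm_le_iff_of_nonneg (jap_pos k).le).2 fun l => ?_
    calc ‖(k l : ℝ)‖ = |(k l : ℝ)| := Real.norm_eq_abs _
      _ ≤ kAbs k := Finset.single_le_sum (f := fun l => |(k l : ℝ)|)
          (fun _ _ => abs_nonneg _) (Finset.mem_univ l)
      _ ≤ jap k := le_max_left _ _
  rw [Real.norm_of_nonneg (jap_rpow_pos k _).le]
  exact Real.rpow_le_rpow_of_nonpos hk0 hle (by linarith)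

theorem tsum_inv_ofReal_jap_rpow_sq_ne_top {d : ℕ} {s : ℝ} (hs : (d : ℝ) / 2 < s) :
    ∑' k : Fin d → ℤ, (ENNReal.ofReal (jap k ^ s))⁻¹ ^ 2 ≠ ∞ := by
  have hterm : ∀ k : Fin d → ℤ,
      (ENNReal.ofReal (jap k ^ s))⁻¹ ^ 2 = ENNReal.ofReal (jap k ^ (-(2 * s))) := fun k => by
    rw [← ENNReal.ofReal_inv_of_pos (jap_rpow_pos k s),
      ← ENNReal.ofReal_pow (inv_nonneg.2 (jap_rpow_pos k s).le),
      Real.rpow_neg (jap_pos k).le, mul_comm 2 s, Real.rpow_mul (jap_pos k).le, Real.rpow_two,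
      inv_pow]
  rw [tsum_congr hterm]
  exact (summable_jap_rpow_neg (by linarith)).tsum_ofReal_ne_top

theorem enorm_fourierConv_le (d : ℕ) (f g : (Fin d → ℤ) → ℂ) (k : Fin d → ℤ) :
    ‖fourierConv d f g k‖ₑ ≤ ∑' j, ‖f j‖ₑ * ‖g (k - j)‖ₑ := by
  simpa only [fourierConv, enorm_mul] using
    enorm_tsum_le_tsum_enorm (f := fun j => f j * g (k - j))

noncomputable def sobEnergy (d : ℕ) (s : ℝ) (u : (Fin d → ℤ) → ℂ) : ℝ≥0∞ :=
  ∑' k, (ENNReal.ofReal (jap k ^ s) * ‖u k‖ₑ) ^ 2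

theorem ofReal_jap_rpow_mul_norm_sq {d : ℕ} (s : ℝ) (u : (Fin d → ℤ) → ℂ) (k : Fin d → ℤ) :
    ENNReal.ofReal (jap k ^ (2 * s) * ‖u k‖ ^ 2) = (ENNReal.ofReal (jap k ^ s) * ‖u k‖ₑ) ^ 2 := by
  rw [← ofReal_norm, ← ENNReal.ofReal_mul (jap_rpow_pos k s).le,
    ← ENNReal.ofReal_pow (mul_nonneg (jap_rpow_pos k s).le (norm_nonneg _)), mul_pow,
    mul_comm 2 s, Real.rpow_mul (jap_pos k).le, Real.rpow_two]

theorem memSob_iff_sobEnergy_ne_top (d : ℕ) (s : ℝ) (u : (Fin d → ℤ) → ℂ) :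
    memSob d s u ↔ sobEnergy d s u ≠ ∞ := by
  simp only [memSob, sobEnergy, ← ofReal_jap_rpow_mul_norm_sq]
  refine ⟨Summable.tsum_ofReal_ne_top, fun h => (ENNReal.summable_toReal h).congr fun k => ?_⟩
  exact ENNReal.toReal_ofReal (mul_nonneg (jap_rpow_pos k _).le (sq_nonneg _))

theorem sobNormSq_eq_toReal_sobEnergy (d : ℕ) (s : ℝ) (u : (Fin d → ℤ) → ℂ) :
    sobNormSq d s u = (sobEnergy d s u).toReal := by
  simp only [sobNormSq, sobEnergy, ← ofReal_jap_rpow_mul_norm_sq]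
  rw [ENNReal.tsum_toReal_eq fun _ => ENNReal.ofReal_ne_top]
  exact tsum_congr fun k =>
    (ENNReal.toReal_ofReal (mul_nonneg (jap_rpow_pos k _).le (sq_nonneg _))).symm

theorem sobEnergy_fourierConv_le {d : ℕ} {s : ℝ} (hs : 0 ≤ s) (f g : (Fin d → ℤ) → ℂ) :
    sobEnergy d s (fourierConv d f g) ≤
      2 * ENNReal.ofReal (2 ^ s) ^ 2 * (∑' k : Fin d → ℤ, (ENNReal.ofReal (jap k ^ s))⁻¹ ^ 2) *
        sobEnergy d s f * sobEnergy d s g := by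
  set ρ : (Fin d → ℤ) → ℝ≥0∞ := fun k => ENNReal.ofReal (jap k ^ s)
  have hρ0 : ∀ k, ρ k ≠ 0 := fun k => by simpa [ρ] using jap_rpow_pos k s
  have hρtop : ∀ k, ρ k ≠ ∞ := fun _ => ENNReal.ofReal_ne_top
  have hρ : ∀ j m, ρ (j + m) ≤ ENNReal.ofReal (2 ^ s) * max (ρ j) (ρ m) := fun j m => by
    simp only [ρ, ← ENNReal.ofReal_max, ← ENNReal.ofReal_mul (by positivity : (0 : ℝ) ≤ 2 ^ s)]
    exact ENNReal.ofReal_le_ofReal (jap_add_rpow_le hs j m)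
  calc sobEnergy d s (fourierConv d f g)
      ≤ ∑' k, (ρ k * ∑' j, ‖f j‖ₑ * ‖g (k - j)‖ₑ) ^ 2 := by
        unfold sobEnergy
        gcongr with k
        exact enorm_fourierConv_le d f g k
    _ ≤ _ := ENNReal.tsum_weight_mul_conv_sq_le hρ0 hρtop
          (ENNReal.weight_sq_mul_tsum_inv_sq_le hρ0 hρtop hρ) _ _

/-- Bilinear (algebra) estimate: for `s > d/2` there is `C_s > 0` with
`‖fg‖_{H^s} ≤ C_s ‖f‖_{H^s} ‖g‖_{H^s}` for all `f, g ∈ H^s(𝕋^d)`. -/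
theorem sobolev_bilinear_estimate (d : ℕ) (s : ℝ) (hs : (d : ℝ) / 2 < s) :
    ∃ C : ℝ, 0 < C ∧ ∀ f g : (Fin d → ℤ) → ℂ, memSob d s f → memSob d s g →
      memSob d s (fourierConv d f g) ∧
      sobNorm d s (fourierConv d f g) ≤ C * sobNorm d s f * sobNorm d s g := by
  have hs0 : 0 ≤ s := le_trans (by positivity) hs.le
  set M := 2 * ENNReal.ofReal (2 ^ s) ^ 2 * ∑' k : Fin d → ℤ, (ENNReal.ofReal (jap k ^ s))⁻¹ ^ 2
  have hMtop : M ≠ ∞ :=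
    ENNReal.mul_ne_top (by finiteness) (tsum_inv_ofReal_jap_rpow_sq_ne_top hs)
  have hM0 : M ≠ 0 := by
    simp [M, ENNReal.tsum_eq_zero, Real.rpow_pos_of_pos two_pos s]
  refine ⟨√M.toReal, Real.sqrt_pos.2 (ENNReal.toReal_pos hM0 hMtop), fun f g hf hg => ?_⟩
  rw [memSob_iff_sobEnergy_ne_top] at hf hg ⊢
  have hfg := sobEnergy_fourierConv_le hs0 f g
  have hRHS : M * sobEnergy d s f * sobEnergy d s g ≠ ∞ :=
    ENNReal.mul_ne_top (ENNReal.mul_ne_top hMtop hf) hg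
  refine ⟨ne_top_of_le_ne_top hRHS hfg, ?_⟩
  simp only [sobNorm, sobNormSq_eq_toReal_sobEnergy]
  rw [← Real.sqrt_mul ENNReal.toReal_nonneg, ← Real.sqrt_mul (by positivity),
    ← ENNReal.toReal_mul, ← ENNReal.toReal_mul]
  exact Real.sqrt_le_sqrt (ENNReal.toReal_mono hRHS hfg)
end

section
/- Under the hypotheses: β > d/2, τ < 2, C₂ a bound such that τC₂ < 1 where C₂ = (1/8)C_{1,τ}C_β‖(u+v*)² + (u+v*)(u+v) + (u+v)²‖_{H^β}, C_{1,τ} the operator norm of ((1−τ/2)I − (τ/2)ε²Δ)^{−1} on H^β, and C_β the Sobolev algebra constant; if v = Ψ_τ(u,v) (exact midpoint solution) and v* is any function in H^β with residual ℛ = Ψ_τ(u,v*) − v*, then ‖v − v*‖_{H^β} ≤ C_{1,τ}/(1 − τC₂) · ‖ℛ‖_{H^β}. -/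
/-!
The error `e = v - v*` solves the linearised midpoint equation
`((1 - τ/2) I - (τ/2) ε² Δ) e = ℛ - (τ/8) e Q`, where `Q = (u+v*)² + (u+v*)(u+v) + (u+v)²`
comes from factoring the difference of cubes `(u+v)³ - (u+v*)³ = e Q`. Applying `S` and the
algebra property gives `‖e‖ ≤ C₁ ‖ℛ‖ + τ C₂ ‖e‖`, which is solved for `‖e‖` since `τ C₂ < 1`.
-/

lemma le_div_mul_of_le_mul_add {x r C k : ℝ} (h : x ≤ C * (r + k * x)) (hCk : C * k < 1) :
    x ≤ C / (1 - C * k) * r := by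
  rw [div_mul_eq_mul_div, le_div_iff₀ (by linarith)]
  linarith

lemma nonneg_of_norm_apply_le_of_surjective {E F : Type*} [SeminormedAddCommGroup E]
    [NormedAddCommGroup F] [Nontrivial F] {S : E → F} {C : ℝ} (hS : Function.Surjective S)
    (hC : ∀ w, ‖S w‖ ≤ C * ‖w‖) : 0 ≤ C := by
  obtain ⟨y, hy⟩ := exists_ne (0 : F)
  obtain ⟨x, rfl⟩ := hS y
  have hpos : 0 < C * ‖x‖ := (norm_pos_iff.mpr hy).trans_le (hC x)
  exact (pos_of_mul_pos_left hpos (norm_nonneg x)).le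

section MidpointScheme

variable {A : Type*} [NormedCommRing A] [NormedAlgebra ℝ A]

lemma smul_half_mul_quarter_sq_sub_one (τ : ℝ) (x : A) :
    τ • ((((1 : ℝ) / 2) • x) * (((1 : ℝ) / 4) • x ^ 2 - 1)) = (τ / 8) • x ^ 3 - (τ / 2) • x := by
  have hcube : x * x ^ 2 = x ^ 3 := by ring
  simp only [smul_mul_assoc, mul_sub, mul_one, mul_smul_comm, hcube]
  match_scalars <;> ring

lemma midpoint_error_eq (Δ : A →ₗ[ℝ] A) {τ ε : ℝ} {Ψ : A → A → A}
    (hΨ : ∀ u v, Ψ u v = u + (τ * ε ^ 2) • Δ (((1 : ℝ) / 2) • (u + v))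
      - τ • ((((1 : ℝ) / 2) • (u + v)) * (((1 : ℝ) / 4) • (u + v) ^ 2 - 1)))
    {u v : A} (hv : v = Ψ u v) (vs : A) :
    (1 - τ / 2) • (v - vs) - ((τ / 2) * ε ^ 2) • Δ (v - vs)
      = (Ψ u vs - vs) - (τ / 8) • ((v - vs) * ((u + vs) ^ 2 + (u + vs) * (u + v) + (u + v) ^ 2)) := by
  have hcubes : (v - vs) * ((u + vs) ^ 2 + (u + vs) * (u + v) + (u + v) ^ 2)
      = (u + v) ^ 3 - (u + vs) ^ 3 := by ring
  rw [hcubes, hΨ, smul_half_mul_quarter_sq_sub_one]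
  rw [hΨ, smul_half_mul_quarter_sq_sub_one] at hv
  simp only [map_sub, map_smul, map_add] at hv ⊢
  linear_combination (norm := module) hv

lemma norm_sub_smul_mul_le {Cβ : ℝ} (halg : ∀ f g : A, ‖f * g‖ ≤ Cβ * ‖f‖ * ‖g‖)
    {a : ℝ} (ha : 0 ≤ a) (r e q : A) :
    ‖r - a • (e * q)‖ ≤ ‖r‖ + a * Cβ * ‖q‖ * ‖e‖ := by
  calc ‖r - a • (e * q)‖ ≤ ‖r‖ + a * ‖e * q‖ := by
        refine (norm_sub_le _ _).trans_eq ?_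
        rw [norm_smul, Real.norm_of_nonneg ha]
    _ ≤ ‖r‖ + a * (Cβ * ‖e‖ * ‖q‖) := by gcongr; exact halg e q
    _ = ‖r‖ + a * Cβ * ‖q‖ * ‖e‖ := by ring

end MidpointScheme

theorem midpoint_residual_stability_general {A : Type*} [NormedCommRing A] [NormedAlgebra ℝ A]
    (Δ S : A →ₗ[ℝ] A) (τ ε Cβ C₁ : ℝ) (hτ0 : 0 < τ)
    (halg : ∀ f g : A, ‖f * g‖ ≤ Cβ * ‖f‖ * ‖g‖)
    (hS : ∀ w : A, S ((1 - τ / 2) • w - ((τ / 2) * ε ^ 2) • Δ w) = w)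
    (hC₁ : ∀ w : A, ‖S w‖ ≤ C₁ * ‖w‖)
    (Ψ : A → A → A)
    (hΨ : ∀ u v, Ψ u v = u + (τ * ε ^ 2) • Δ (((1 : ℝ) / 2) • (u + v))
      - τ • ((((1 : ℝ) / 2) • (u + v)) * (((1 : ℝ) / 4) • (u + v) ^ 2 - 1)))
    (u v vs : A) (hv : v = Ψ u v) (C₂ : ℝ)
    (hC₂ : C₂ = (1 / 8) * C₁ * Cβ * ‖(u + vs) ^ 2 + (u + vs) * (u + v) + (u + v) ^ 2‖)
    (hτC₂ : τ * C₂ < 1) :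
    ‖v - vs‖ ≤ C₁ / (1 - τ * C₂) * ‖Ψ u vs - vs‖ := by
  rcases subsingleton_or_nontrivial A with hA | hA
  · simp [Subsingleton.elim (v - vs) 0, Subsingleton.elim (Ψ u vs - vs) 0]
  have hC₁0 : 0 ≤ C₁ := nonneg_of_norm_apply_le_of_surjective (fun w => ⟨_, hS w⟩) hC₁
  set Q := (u + vs) ^ 2 + (u + vs) * (u + v) + (u + v) ^ 2
  have hk : C₁ * (τ / 8 * Cβ * ‖Q‖) = τ * C₂ := by rw [hC₂]; ring
  have hbound : ‖v - vs‖ ≤ C₁ * (‖Ψ u vs - vs‖ + τ / 8 * Cβ * ‖Q‖ * ‖v - vs‖) := by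
    calc ‖v - vs‖ = ‖S ((1 - τ / 2) • (v - vs) - ((τ / 2) * ε ^ 2) • Δ (v - vs))‖ := by
          rw [hS]
      _ ≤ C₁ * ‖(Ψ u vs - vs) - (τ / 8) • ((v - vs) * Q)‖ := by
          rw [← midpoint_error_eq Δ hΨ hv vs]; exact hC₁ _
      _ ≤ _ := by gcongr; exact norm_sub_smul_mul_le halg (by positivity) _ _ _
  rw [← hk]
  exact le_div_mul_of_le_mul_add hbound (hk ▸ hτC₂)

/-- Stability of the implicit midpoint scheme: if `v = Ψ_τ(u,v)` is the exact midpoint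
solution and `v*` is any approximation with residual `ℛ = Ψ_τ(u,v*) − v*`, then in a
commutative normed ℝ-algebra (such as `H^β(𝕋^d)`, `β > d/2`, with algebra constant `C_β`)
with `S = ((1−τ/2)I − (τ/2)ε²Δ)^{−1}` of norm `≤ C₁` and `τ C₂ < 1`,
`‖v − v*‖ ≤ C₁/(1 − τ C₂) · ‖ℛ‖`. -/
theorem midpoint_residual_stability {A : Type*} [NormedCommRing A] [NormedAlgebra ℝ A]
    (Δ S : A →ₗ[ℝ] A) (τ ε Cβ C₁ : ℝ) (hτ0 : 0 < τ) (hτ2 : τ < 2)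
    (halg : ∀ f g : A, ‖f * g‖ ≤ Cβ * ‖f‖ * ‖g‖)
    (hS : ∀ w : A, S ((1 - τ / 2) • w - ((τ / 2) * ε ^ 2) • Δ w) = w)
    (hC₁ : ∀ w : A, ‖S w‖ ≤ C₁ * ‖w‖)
    (Ψ : A → A → A)
    (hΨ : ∀ u v, Ψ u v = u + (τ * ε ^ 2) • Δ (((1 : ℝ) / 2) • (u + v))
      - τ • ((((1 : ℝ) / 2) • (u + v)) * (((1 : ℝ) / 4) • (u + v) ^ 2 - 1)))
    (u v vs : A) (hv : v = Ψ u v) (C₂ : ℝ)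
    (hC₂ : C₂ = (1 / 8) * C₁ * Cβ * ‖(u + vs) ^ 2 + (u + vs) * (u + v) + (u + v) ^ 2‖)
    (hτC₂ : τ * C₂ < 1) :
    ‖v - vs‖ ≤ C₁ / (1 - τ * C₂) * ‖Ψ u vs - vs‖ :=
  midpoint_residual_stability_general Δ S τ ε Cβ C₁ hτ0 halg hS hC₁ Ψ hΨ u v vs hv C₂ hC₂ hτC₂
end
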